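/- (Hamilton–Poisson realization for d ≠ 0) For all (x,y,z) ∈ ℝ³, the matrix–vector product π(x,y,z) · ∇H(x,y,z) equals the vector field of the system (1.1): (x(by+cz), y(ax−by+cz+d), z(−ax+by−cz−d)), where H(x,y,z) = d·y·z and ∇H(x,y,z) = (0, dz, dy). -/

import Mathlib

theorem pi_gradH_eq_vector_field_d (a b c d : ℝ)
    (ha : a ≠ 0) (hd : d ≠ 0) (x y z : ℝ) :
    (!![0, c / (a * d) * (a * x - 2 * b * y), b / (a * d) * (a * x + 2 * c * z);
        -(c / (a * d) * (a * x - 2 * b * y)), 0, 1 / d * (a * x - b * y + c * z + d);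
        -(b / (a * d) * (a * x + 2 * c * z)), -(1 / d * (a * x - b * y + c * z + d)), 0]
      : Matrix (Fin 3) (Fin 3) ℝ).mulVec ![0, d * z, d * y]
    = ![x * (b * y + c * z),
        y * (a * x - b * y + c * z + d),
        z * (-(a * x) + b * y - c * z - d)] := by
  -- In the first row the two `2bcyz` terms cancel, leaving `a x (by + cz) / a`.
  ext i
  fin_cases i <;> simp [Matrix.mulVec] <;> field_simp <;> ring
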